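/- arXiv:2110.08108 — 4 statements merged into one kernel-verified Lean document; each statement's English description precedes it below -/
import Mathlib

section
/- For every positive integer n, the sum of mex(π) over all partitions π of n equals the number of partitions of n into distinct parts where each part comes in one of two colors. -/
open Finset

/-- The minimal excludant of a partition: the least positive integer not a part. -/
noncomputable def mex {n : ℕ} (π : Nat.Partition n) : ℕ :=
  sInf {m : ℕ | 0 < m ∧ m ∉ π.parts}

/-- Number of partitions of `n` with minimal excludant `m`. -/
noncomputable def pmex (m n : ℕ) : ℕ :=
  ((Finset.univ : Finset (Nat.Partition n)).filter (fun π => mex π = m)).card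

/-- The partition function, extended by `0` on negative integers. -/
noncomputable def pz (k : ℤ) : ℕ := if 0 ≤ k then Fintype.card (Nat.Partition k.toNat) else 0

/-- Number of partitions of `m` into distinct parts. -/
def qdist (m : ℕ) : ℕ := (Nat.Partition.distincts m).card

/-- A two-colored distinct-parts partition of `n`: a set of distinct (part, color)
pairs with positive parts summing to `n`. -/
def IsTCD (n : ℕ) (s : Finset (ℕ × Fin 2)) : Prop :=
  (∀ p ∈ s, 0 < p.1) ∧ ∑ p ∈ s, p.1 = n

noncomputable def D2 (n : ℕ) : ℕ := Set.ncard {s : Finset (ℕ × Fin 2) | IsTCD n s}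
noncomputable def D2e (n : ℕ) : ℕ :=
  Set.ncard {s : Finset (ℕ × Fin 2) | IsTCD n s ∧ Even s.card}
noncomputable def D2o (n : ℕ) : ℕ :=
  Set.ncard {s : Finset (ℕ × Fin 2) | IsTCD n s ∧ Odd s.card}


/-!
`mex π` counts the `j ≥ 0` with `{1, …, j} ⊆ π`, and removing that staircase from `π` gives
`σmex(n) = ∑_{j ≥ 0} p(n - j(j+1)/2)`.

Signing the parts by their colour turns a two-coloured distinct-parts partition of `n` into a finite
`D ⊆ ℤ ∖ {0}` of weight `∑ |d| = n`; adjoining or removing `0` shows that there are `2 D₂(n)` finite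
`D ⊆ ℤ` of weight `n`. Read `D` as the Maya diagram occupied at the positive elements of `D` and at
the nonpositive integers outside `D`, of charge `#{d > 0} - #{d ≤ 0}`. Shifting the diagram by one
site lowers the charge by one and the weight by the charge, so there are `p(n - k(k+1)/2)` diagrams
of charge `k` and weight `n`: for `k = 0` these are the Frobenius coordinates of the Young diagrams
with `n` cells. Since `k` and `-k-1` give the same triangular number,
`2 D₂(n) = 2 ∑_{j ≥ 0} p(n - j(j+1)/2)`.
-/

theorem Multiset.card_filter_le_eq_card_filter_lt_add_count (M : Multiset ℕ) (t : ℕ) :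
    Multiset.card (M.filter (t ≤ ·)) = Multiset.card (M.filter (t < ·)) + M.count t := by
  induction M using Multiset.induction_on with
  | empty => simp
  | cons x M ih =>
    simp only [Multiset.filter_cons, Multiset.count_cons, Multiset.card_add]
    split_ifs <;> simp_all <;> omega

theorem Multiset.eq_of_card_filter_lt {M N : Multiset ℕ} (hcard : Multiset.card M = Multiset.card N)
    (h : ∀ t, Multiset.card (M.filter (t < ·)) = Multiset.card (N.filter (t < ·))) : M = N := by
  ext t
  rcases t with _ | s
  · have hM := M.card_filter_le_eq_card_filter_lt_add_count 0
    have hN := N.card_filter_le_eq_card_filter_lt_add_count 0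
    rw [Multiset.filter_eq_self.2 fun _ _ => Nat.zero_le _] at hM hN
    have := h 0
    omega
  · have hM : Multiset.card (M.filter (s < ·)) = _ :=
      M.card_filter_le_eq_card_filter_lt_add_count (s + 1)
    have hN : Multiset.card (N.filter (s < ·)) = _ :=
      N.card_filter_le_eq_card_filter_lt_add_count (s + 1)
    have := h s
    have := h (s + 1)
    omega

theorem Finset.lt_card_iff_mem_of_downward_closed {S : Finset ℕ} (hS : ∀ i ∈ S, ∀ j ≤ i, j ∈ S)
    {x : ℕ} : x < #S ↔ x ∈ S := by
  have hsub : S ⊆ range #S := fun i hi => mem_range.2 <| by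
    simpa using card_le_card (show range (i + 1) ⊆ S from
      fun j hj => hS i hi j (Nat.lt_succ_iff.1 (mem_range.1 hj)))
  conv_rhs => rw [eq_of_subset_of_card_le hsub (by simp)]
  simp

theorem Finset.card_filter_lt_le_card_filter_lt_add (D : Finset ℤ) {s s' : ℤ} (h : s ≤ s') :
    (#{d ∈ D | s < d} : ℤ) ≤ #{d ∈ D | s' < d} + (s' - s) := by
  have hsub : {d ∈ D | s < d} ⊆ {d ∈ D | s' < d} ∪ Ioc s s' := fun d hd => by
    rw [mem_filter] at hd
    rw [mem_union, mem_filter, mem_Ioc]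
    by_cases hd' : s' < d
    exacts [Or.inl ⟨hd.1, hd'⟩, Or.inr ⟨hd.2, not_lt.1 hd'⟩]
  have := (card_le_card hsub).trans (card_union_le _ _)
  rw [Int.card_Ioc] at this
  omega

theorem Finset.card_filter_le_le_card_filter_le_add (D : Finset ℤ) {s s' : ℤ} (h : s ≤ s') :
    (#{d ∈ D | d ≤ s'} : ℤ) ≤ #{d ∈ D | d ≤ s} + (s' - s) := by
  have hsub : {d ∈ D | d ≤ s'} ⊆ {d ∈ D | d ≤ s} ∪ Ioc s s' := fun d hd => by
    rw [mem_filter] at hd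
    rw [mem_union, mem_filter, mem_Ioc]
    by_cases hd' : d ≤ s
    exacts [Or.inl ⟨hd.1, hd'⟩, Or.inr ⟨not_le.1 hd', hd.2⟩]
  have := (card_le_card hsub).trans (card_union_le _ _)
  rw [Int.card_Ioc] at this
  omega

theorem Finset.card_filter_le_eq_card_filter_lt_add (D : Finset ℤ) (t : ℤ) :
    #{d ∈ D | t ≤ d} = #{d ∈ D | t < d} + if t ∈ D then 1 else 0 := by
  rw [← card_singleton t, ← card_empty, ← apply_ite, ← filter_eq', ← card_union_of_disjoint,
    ← filter_or]
  · exact congrArg card (filter_congr fun d _ => by omega)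
  · exact disjoint_filter.2 fun d _ h1 h2 => by omega

theorem Finset.card_filter_le_eq_card_filter_le_add (D : Finset ℤ) (t : ℤ) :
    #{d ∈ D | d ≤ t} = #{d ∈ D | d ≤ t - 1} + if t ∈ D then 1 else 0 := by
  rw [← card_singleton t, ← card_empty, ← apply_ite, ← filter_eq', ← card_union_of_disjoint,
    ← filter_or]
  · exact congrArg card (filter_congr fun d _ => by omega)
  · exact disjoint_filter.2 fun d _ h1 h2 => by omega

theorem Finset.eq_of_card_filter_lt_of_card_filter_le {D E : Finset ℤ}
    (hpos : ∀ s : ℕ, #{d ∈ D | (s : ℤ) < d} = #{d ∈ E | (s : ℤ) < d})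
    (hneg : ∀ s : ℕ, #{d ∈ D | d ≤ -(s : ℤ)} = #{d ∈ E | d ≤ -(s : ℤ)}) : D = E := by
  ext t
  suffices (if t ∈ D then 1 else 0) = if t ∈ E then 1 else 0 by split_ifs at this <;> tauto
  obtain ⟨s, rfl | rfl⟩ := Int.eq_nat_or_neg t
  · rcases s with _ | s
    · have hD := D.card_filter_le_eq_card_filter_le_add 0
      have hE := E.card_filter_le_eq_card_filter_le_add 0
      have h0 := hneg 0
      have h1 := hneg 1
      simp only [Nat.cast_zero, neg_zero, zero_sub, Nat.cast_one] at hD hE h0 h1 ⊢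
      omega
    · have hlt (F : Finset ℤ) : #{d ∈ F | (s : ℤ) < d} =
          #{d ∈ F | ((s + 1 : ℕ) : ℤ) < d} + if ((s + 1 : ℕ) : ℤ) ∈ F then 1 else 0 := by
        rw [← card_filter_le_eq_card_filter_lt_add]
        exact congrArg card <| filter_congr fun d _ => by omega
      have hD := hlt D
      have hE := hlt E
      have h0 := hpos s
      have h1 := hpos (s + 1)
      omega
  · have hD := D.card_filter_le_eq_card_filter_le_add (-s)
    have hE := E.card_filter_le_eq_card_filter_le_add (-s)
    have h0 := hneg s
    have h1 := hneg (s + 1)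
    push_cast at h1
    rw [show -(s : ℤ) - 1 = -(s + 1) by ring] at hD hE
    omega

theorem Finset.sum_symmDiff_singleton {α β : Type*} [DecidableEq α] [AddCommGroup β]
    (E : Finset α) (a : α) (f : α → β) :
    ∑ x ∈ symmDiff E {a}, f x = ∑ x ∈ E, f x + if a ∈ E then -f a else f a := by
  split_ifs with h
  · rw [show symmDiff E {a} = E.erase a by ext; simp [symmDiff_def]; aesop, sum_erase_eq_sub h,
      sub_eq_add_neg]
  · rw [show symmDiff E {a} = insert a E by ext; simp [symmDiff_def]; aesop, sum_insert h,
      add_comm]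

namespace MayaDiagram

/-- A finite `D ⊆ ℤ` encodes the Maya diagram whose occupied sites are the positive elements of
`D` together with the nonpositive integers not in `D`. -/
def weight (D : Finset ℤ) : ℕ := ∑ d ∈ D, d.natAbs

def charge (D : Finset ℤ) : ℤ := ∑ d ∈ D, if 0 < d then 1 else -1

theorem charge_eq_card_sub_card (D : Finset ℤ) :
    charge D = #{d ∈ D | 0 < d} - #{d ∈ D | d ≤ 0} := by
  simp [charge, sum_ite, not_lt, sub_eq_add_neg]

theorem natAbs_le_weight {D : Finset ℤ} {d : ℤ} (hd : d ∈ D) : d.natAbs ≤ weight D :=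
  single_le_sum (fun _ _ => Nat.zero_le _) hd

def toggleZero : Equiv.Perm (Finset ℤ) :=
  Function.Involutive.toPerm (symmDiff · {0}) fun D => symmDiff_symmDiff_cancel_right {0} D

theorem toggleZero_apply (D : Finset ℤ) : toggleZero D = symmDiff D {0} := rfl

theorem toggleZero_toggleZero (D : Finset ℤ) : toggleZero (toggleZero D) = D :=
  symmDiff_symmDiff_cancel_right {0} D

theorem zero_mem_toggleZero {D : Finset ℤ} : 0 ∈ toggleZero D ↔ 0 ∉ D := by
  simp [toggleZero_apply, mem_symmDiff]

theorem weight_toggleZero (D : Finset ℤ) : weight (toggleZero D) = weight D := by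
  have := sum_symmDiff_singleton D 0 fun d => (d.natAbs : ℤ)
  simp only [Int.natAbs_zero, Nat.cast_zero, neg_zero, ite_self, add_zero] at this
  exact_mod_cast this

theorem charge_toggleZero (D : Finset ℤ) :
    charge (toggleZero D) = charge D + if 0 ∈ D then 1 else -1 := by
  simp [charge, toggleZero_apply, sum_symmDiff_singleton]

/-- Moving every site of the Maya diagram down by one; the toggle accounts for the site that
crosses from `1` to `0`, where the encoding changes sides. -/
def shift : Equiv.Perm (Finset ℤ) := (Equiv.subRight 1).finsetCongr.trans toggleZero

theorem shift_apply (D : Finset ℤ) :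
    shift D = toggleZero (D.map (Equiv.subRight 1).toEmbedding) := rfl

theorem charge_shift (D : Finset ℤ) : charge (shift D) = charge D - 1 := by
  have hσ : ∀ d : ℤ, (if 0 < d - 1 then (1 : ℤ) else -1) =
      (if 0 < d then 1 else -1) - if d = 1 then 2 else 0 := fun d => by split_ifs <;> omega
  have h1 : (0 : ℤ) ∈ D.map (Equiv.subRight 1).toEmbedding ↔ 1 ∈ D := by simp
  rw [shift_apply, charge_toggleZero, charge, sum_map]
  simp only [Equiv.coe_toEmbedding, Equiv.subRight_apply, hσ, sum_sub_distrib, sum_ite_eq', h1]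
  rw [← charge]
  split_ifs <;> ring

theorem weight_shift (D : Finset ℤ) : (weight (shift D) : ℤ) = weight D - charge D := by
  rw [shift_apply, weight_toggleZero, weight, weight, charge, sum_map, Nat.cast_sum, Nat.cast_sum,
    ← sum_sub_distrib]
  refine sum_congr rfl fun d _ => ?_
  simp only [Equiv.coe_toEmbedding, Equiv.subRight_apply]
  split_ifs <;> omega

noncomputable def count (k w : ℤ) : ℕ :=
  Nat.card {D : Finset ℤ // charge D = k ∧ (weight D : ℤ) = w}

theorem count_eq_count_sub_one (k w : ℤ) : count k w = count (k - 1) (w - k) :=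
  Nat.card_congr <| shift.subtypeEquiv fun D => by
    rw [charge_shift, weight_shift]
    omega

theorem card_filter_pos_eq_of_charge_eq_zero {D : Finset ℤ} (hD : charge D = 0) :
    #{d ∈ D | 0 < d} = #{d ∈ D | d ≤ 0} := by
  rw [charge_eq_card_sub_card] at hD
  omega

/-- The cells of the Young diagram whose Maya diagram is `D`, inverse to `YoungDiagram.maya`. -/
def IsCell (D : Finset ℤ) (x y : ℕ) : Prop :=
  (x ≤ y ∧ x < #{d ∈ D | (y : ℤ) - x < d}) ∨ (y < x ∧ y < #{d ∈ D | d ≤ (y : ℤ) - x})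

instance (D : Finset ℤ) (x y : ℕ) : Decidable (IsCell D x y) := by
  unfold IsCell
  infer_instance

variable {D : Finset ℤ}

theorem isCell_of_le_right (hD : charge D = 0) {x y y' : ℕ} (h : IsCell D x y) (hy : y' ≤ y) :
    IsCell D x y' := by
  have h0 := card_filter_pos_eq_of_charge_eq_zero hD
  rcases h with ⟨hxy, hx⟩ | ⟨hyx, hy'⟩
  · by_cases hxy' : x ≤ y'
    · refine Or.inl ⟨hxy', hx.trans_le <| card_le_card <| monotone_filter_right _ ?_⟩
      intro d _ hd
      omega
    · have h1 : #{d ∈ D | (y : ℤ) - x < d} ≤ #{d ∈ D | 0 < d} :=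
        card_le_card <| monotone_filter_right _ fun d _ hd => by omega
      have h2 := D.card_filter_le_le_card_filter_le_add (s := (y' : ℤ) - x) (s' := 0) (by omega)
      exact Or.inr ⟨by omega, by omega⟩
  · have h2 := D.card_filter_le_le_card_filter_le_add (s := (y' : ℤ) - x) (s' := (y : ℤ) - x)
      (by omega)
    exact Or.inr ⟨by omega, by omega⟩

theorem isCell_of_le_left (hD : charge D = 0) {x x' y : ℕ} (h : IsCell D x y) (hx : x' ≤ x) :
    IsCell D x' y := by
  have h0 := card_filter_pos_eq_of_charge_eq_zero hD
  rcases h with ⟨hxy, hx'⟩ | ⟨hyx, hy⟩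
  · have h2 := D.card_filter_lt_le_card_filter_lt_add (s := (y : ℤ) - x) (s' := (y : ℤ) - x')
      (by omega)
    exact Or.inl ⟨by omega, by omega⟩
  · by_cases hyx' : y < x'
    · refine Or.inr ⟨hyx', hy.trans_le <| card_le_card <| monotone_filter_right _ ?_⟩
      intro d _ hd
      omega
    · have h1 : #{d ∈ D | d ≤ (y : ℤ) - x} ≤ #{d ∈ D | d ≤ 0} :=
        card_le_card <| monotone_filter_right _ fun d _ hd => by omega
      have h2 := D.card_filter_lt_le_card_filter_lt_add (s := 0) (s' := (y : ℤ) - x') (by omega)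
      exact Or.inl ⟨by omega, by omega⟩

theorem lt_card_add_weight_of_isCell {x y : ℕ} (h : IsCell D x y) :
    x < #D + weight D ∧ y < #D + weight D := by
  rcases h with ⟨hxy, hx⟩ | ⟨hyx, hy⟩
  · obtain ⟨d, hd⟩ := card_pos.1 (x.zero_le.trans_lt hx)
    have := card_le_card (filter_subset (fun d => (y : ℤ) - x < d) D)
    rw [mem_filter] at hd
    have := natAbs_le_weight hd.1
    omega
  · obtain ⟨d, hd⟩ := card_pos.1 (y.zero_le.trans_lt hy)
    have := card_le_card (filter_subset (fun d => d ≤ (y : ℤ) - x) D)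
    rw [mem_filter] at hd
    have := natAbs_le_weight hd.1
    omega

end MayaDiagram

namespace YoungDiagram

def ofRowMultiset (M : Multiset ℕ) : YoungDiagram where
  cells := (range (Multiset.card M) ×ˢ range M.sum).filter
    fun c => c.1 < Multiset.card (M.filter (c.2 < ·))
  isLowerSet a b hba ha := by
    obtain ⟨h1, h2⟩ := hba
    simp only [coe_filter, mem_product, mem_range, Set.mem_ofPred_eq] at ha ⊢
    have : Multiset.card (M.filter (a.2 < ·)) ≤ Multiset.card (M.filter (b.2 < ·)) :=
      Multiset.card_le_card <| M.monotone_filter_right fun x hx => lt_of_le_of_lt h2 hx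
    exact ⟨⟨by omega, by omega⟩, by omega⟩

theorem mem_ofRowMultiset {M : Multiset ℕ} {c : ℕ × ℕ} :
    c ∈ ofRowMultiset M ↔ c.1 < Multiset.card (M.filter (c.2 < ·)) := by
  refine ⟨fun h => (mem_filter.1 h).2, fun h => mem_filter.2 ⟨mem_product.2 ⟨?_, ?_⟩, h⟩⟩
  · exact mem_range.2 <| h.trans_le <| Multiset.card_le_card <| M.filter_le _
  · obtain ⟨x, hx⟩ := Multiset.card_pos_iff_exists_mem.1 (c.1.zero_le.trans_lt h)
    rw [Multiset.mem_filter] at hx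
    exact mem_range.2 <| hx.2.trans_le <| Multiset.le_sum_of_mem hx.1

theorem colLen_ofRowMultiset (M : Multiset ℕ) (j : ℕ) :
    (ofRowMultiset M).colLen j = Multiset.card (M.filter (j < ·)) :=
  eq_of_forall_lt_iff fun i => by rw [← mem_iff_lt_colLen, mem_ofRowMultiset]

def rowMultiset (μ : YoungDiagram) : Multiset ℕ := (range (μ.colLen 0)).val.map μ.rowLen

theorem card_filter_rowMultiset (μ : YoungDiagram) (j : ℕ) :
    Multiset.card (μ.rowMultiset.filter (j < ·)) = μ.colLen j := by
  have : (range (μ.colLen 0)).filter (fun i => j < μ.rowLen i) = range (μ.colLen j) := by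
    ext i
    simp only [mem_filter, mem_range, ← mem_iff_lt_rowLen, mem_iff_lt_colLen]
    exact ⟨And.right, fun h => ⟨h.trans_le (μ.colLen_anti 0 j j.zero_le), h⟩⟩
  rw [rowMultiset, Multiset.filter_map, Multiset.card_map, ← filter_val, ← card_def]
  simp only [Function.comp_def]
  rw [this, card_range]

theorem pos_of_mem_rowMultiset {μ : YoungDiagram} {x : ℕ} (hx : x ∈ μ.rowMultiset) : 0 < x := by
  obtain ⟨i, hi, rfl⟩ := Multiset.mem_map.1 hx
  rw [← mem_iff_lt_rowLen, mem_iff_lt_colLen]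
  exact mem_range.1 hi

theorem sum_rowMultiset (μ : YoungDiagram) : μ.rowMultiset.sum = #μ.cells := by
  have hrow : Set.MapsTo Prod.fst (μ.cells : Set (ℕ × ℕ)) (range (μ.colLen 0) : Set ℕ) :=
    fun c hc => by
      have : (c.1, c.2) ∈ μ := mem_coe.1 hc
      simpa [← mem_iff_lt_colLen] using μ.up_left_mem le_rfl (Nat.zero_le c.2) this
  rw [card_eq_sum_card_fiberwise hrow]
  exact sum_congr rfl fun i _ => μ.rowLen_eq_card

theorem ofRowMultiset_rowMultiset (μ : YoungDiagram) : ofRowMultiset μ.rowMultiset = μ :=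
  YoungDiagram.ext <| Finset.ext fun c => by
    rw [mem_cells, mem_cells, mem_ofRowMultiset, card_filter_rowMultiset, ← mem_iff_lt_colLen]

theorem rowMultiset_ofRowMultiset {M : Multiset ℕ} (hM : ∀ x ∈ M, 0 < x) :
    (ofRowMultiset M).rowMultiset = M := by
  refine Multiset.eq_of_card_filter_lt ?_ fun t => ?_
  · rw [rowMultiset, Multiset.card_map, card_val, card_range, colLen_ofRowMultiset,
      Multiset.filter_eq_self.2 hM]
  · rw [card_filter_rowMultiset, colLen_ofRowMultiset]

def equivPartition (n : ℕ) : Nat.Partition n ≃ {μ : YoungDiagram // #μ.cells = n} where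
  toFun π := ⟨ofRowMultiset π.parts, by
    rw [← sum_rowMultiset, rowMultiset_ofRowMultiset fun _ => π.parts_pos, π.parts_sum]⟩
  invFun μ := ⟨μ.1.rowMultiset, pos_of_mem_rowMultiset, by rw [sum_rowMultiset, μ.2]⟩
  left_inv π := Nat.Partition.ext <| rowMultiset_ofRowMultiset fun _ => π.parts_pos
  right_inv μ := Subtype.ext <| ofRowMultiset_rowMultiset μ

open MayaDiagram

def diag (μ : YoungDiagram) : Finset ℕ := (range (μ.rowLen 0)).filter fun i => (i, i) ∈ μ

theorem mem_diag {μ : YoungDiagram} {i : ℕ} : i ∈ μ.diag ↔ (i, i) ∈ μ := by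
  refine ⟨fun h => (mem_filter.1 h).2, fun h => mem_filter.2 ⟨mem_range.2 ?_, h⟩⟩
  exact (mem_iff_lt_rowLen.1 h).trans_le (μ.rowLen_anti 0 i i.zero_le)

def armPositions (μ : YoungDiagram) : Finset ℤ := μ.diag.image fun i => (μ.rowLen i : ℤ) - i

theorem injOn_armPositions (μ : YoungDiagram) :
    Set.InjOn (fun i => (μ.rowLen i : ℤ) - i) μ.diag := by
  intro i _ j _ hij
  have := μ.rowLen_anti i j
  have := μ.rowLen_anti j i
  simp only at hij
  omega

theorem pos_of_mem_armPositions {μ : YoungDiagram} {a : ℤ} (ha : a ∈ μ.armPositions) : 0 < a := by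
  obtain ⟨i, hi, rfl⟩ := mem_image.1 ha
  have := mem_iff_lt_rowLen.1 (mem_diag.1 hi)
  omega

theorem lt_card_filter_armPositions_iff (μ : YoungDiagram) (s x : ℕ) :
    x < #{a ∈ μ.armPositions | (s : ℤ) < a} ↔ (x, x + s) ∈ μ := by
  have hmem : ∀ i, i ∈ μ.diag.filter (fun i => (s : ℤ) < μ.rowLen i - i) ↔ (i, i + s) ∈ μ := by
    intro i
    rw [mem_filter, mem_diag, mem_iff_lt_rowLen, mem_iff_lt_rowLen]
    omega
  rw [armPositions, filter_image, card_image_of_injOn ((injOn_armPositions μ).mono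
    (coe_subset.2 (filter_subset _ _))), lt_card_iff_mem_of_downward_closed, hmem]
  intro i hi j hji
  rw [hmem, mem_iff_lt_rowLen] at hi ⊢
  have := μ.rowLen_anti j i hji
  omega

/-- Frobenius coordinates: for each diagonal cell, its arm length plus one as a positive element
and minus its leg length as a nonpositive one (the legs being the arms of the transpose). -/
def maya (μ : YoungDiagram) : Finset ℤ :=
  μ.armPositions ∪ μ.transpose.armPositions.image (1 - ·)

theorem maya_transpose (μ : YoungDiagram) : μ.transpose.maya = μ.maya.image (1 - ·) := by
  rw [maya, maya, transpose_transpose, image_union, image_image]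
  simp only [Function.comp_def, sub_sub_cancel, image_id']
  exact union_comm _ _

theorem card_filter_maya_lt (μ : YoungDiagram) (s : ℕ) :
    #{e ∈ μ.maya | (s : ℤ) < e} = #{a ∈ μ.armPositions | (s : ℤ) < a} := by
  have hlow : {b ∈ μ.transpose.armPositions | (s : ℤ) < 1 - b} = ∅ :=
    filter_false_of_mem fun b hb => by
      have := pos_of_mem_armPositions hb
      omega
  rw [maya, filter_union, filter_image, hlow, image_empty, union_empty]

theorem lt_card_filter_maya_lt_iff (μ : YoungDiagram) (s x : ℕ) :
    x < #{e ∈ μ.maya | (s : ℤ) < e} ↔ (x, x + s) ∈ μ := by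
  rw [card_filter_maya_lt, lt_card_filter_armPositions_iff]

theorem lt_card_filter_maya_le_iff (μ : YoungDiagram) (s x : ℕ) :
    x < #{e ∈ μ.maya | e ≤ -(s : ℤ)} ↔ (x + s, x) ∈ μ := by
  have : #{e ∈ μ.maya | e ≤ -(s : ℤ)} = #{e ∈ μ.transpose.maya | (s : ℤ) < e} := by
    rw [maya_transpose, filter_image, card_image_of_injective _ sub_right_injective]
    exact congrArg card <| filter_congr fun e _ => by omega
  rw [this, lt_card_filter_maya_lt_iff, mem_transpose]
  rfl

theorem card_filter_maya_pos_eq (μ : YoungDiagram) :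
    #{e ∈ μ.maya | 0 < e} = #{e ∈ μ.maya | e ≤ 0} :=
  eq_of_forall_lt_iff fun x => by
    simpa using (μ.lt_card_filter_maya_lt_iff 0 x).trans (μ.lt_card_filter_maya_le_iff 0 x).symm

theorem charge_maya (μ : YoungDiagram) : charge μ.maya = 0 := by
  rw [charge_eq_card_sub_card, card_filter_maya_pos_eq, sub_self]

theorem card_filter_cells_add_le (μ : YoungDiagram) (k : ℕ) :
    #{c ∈ μ.cells | c.1 + k ≤ c.2} = ∑ i ∈ μ.diag, (μ.rowLen i - (i + k)) := by
  have hmaps : Set.MapsTo Prod.fst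
      (({c ∈ μ.cells | c.1 + k ≤ c.2} : Finset (ℕ × ℕ)) : Set (ℕ × ℕ)) μ.diag :=
    fun c hc => by
      rw [mem_coe, mem_filter] at hc
      exact mem_diag.2 <| μ.up_left_mem le_rfl (by omega) (show (c.1, c.2) ∈ μ from hc.1)
  rw [card_eq_sum_card_fiberwise hmaps]
  refine sum_congr rfl fun i _ => ?_
  refine (congrArg card ?_).trans ((card_map ⟨(i, ·), Prod.mk_right_injective i⟩).trans
    (Nat.card_Ico _ _))
  ext ⟨a, b⟩
  simp only [mem_filter, mem_cells, mem_map, mem_Ico, Function.Embedding.coeFn_mk, Prod.mk.injEq,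
    mem_iff_lt_rowLen]
  constructor
  · rintro ⟨⟨hab, hk⟩, rfl⟩
    exact ⟨b, ⟨hk, hab⟩, rfl, rfl⟩
  · rintro ⟨b, ⟨hk, hb⟩, rfl, rfl⟩
    exact ⟨⟨hb, hk⟩, rfl⟩

theorem weight_armPositions (μ : YoungDiagram) :
    weight μ.armPositions = ∑ i ∈ μ.diag, (μ.rowLen i - i) := by
  rw [weight, armPositions, sum_image (injOn_armPositions μ)]
  refine sum_congr rfl fun i hi => ?_
  have := mem_iff_lt_rowLen.1 (mem_diag.1 hi)
  omega

theorem weight_maya (μ : YoungDiagram) : weight μ.maya = #μ.cells := by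
  have hdisj : Disjoint μ.armPositions (μ.transpose.armPositions.image (1 - ·)) :=
    disjoint_left.2 fun a ha ha' => by
      obtain ⟨b, hb, rfl⟩ := mem_image.1 ha'
      have := pos_of_mem_armPositions ha
      have := pos_of_mem_armPositions hb
      omega
  have hlow : weight (μ.transpose.armPositions.image (1 - ·)) =
      ∑ i ∈ μ.transpose.diag, (μ.transpose.rowLen i - (i + 1)) := by
    rw [weight, sum_image fun x _ y _ (h : 1 - x = 1 - y) => by omega, armPositions,
      sum_image (injOn_armPositions _)]
    refine sum_congr rfl fun i hi => ?_
    have := mem_iff_lt_rowLen.1 (mem_diag.1 hi)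
    omega
  have hcells : #μ.cells = #{c ∈ μ.cells | c.1 + 0 ≤ c.2} +
      #{c ∈ μ.transpose.cells | c.1 + 1 ≤ c.2} := by
    rw [← card_filter_add_card_filter_not (fun c : ℕ × ℕ => c.1 + 0 ≤ c.2)]
    congr 1
    refine card_equiv (Equiv.prodComm ℕ ℕ) fun c => ?_
    simp only [mem_filter, mem_cells, Equiv.prodComm_apply, mem_transpose, Prod.swap_swap,
      Prod.fst_swap, Prod.snd_swap]
    exact and_congr_right fun _ => by omega
  rw [maya, weight, sum_union hdisj, ← weight, ← weight, weight_armPositions, hlow, hcells,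
    card_filter_cells_add_le, card_filter_cells_add_le]
  simp

def ofMaya (D : Finset ℤ) (hD : charge D = 0) : YoungDiagram where
  cells := (range (#D + weight D) ×ˢ range (#D + weight D)).filter fun c => IsCell D c.1 c.2
  isLowerSet a b hba ha := by
    rw [mem_coe, mem_filter] at ha
    have hb := isCell_of_le_right hD (isCell_of_le_left hD ha.2 hba.1) hba.2
    rw [mem_coe, mem_filter, mem_product, mem_range, mem_range]
    exact ⟨lt_card_add_weight_of_isCell hb, hb⟩

theorem mem_ofMaya {D : Finset ℤ} {hD : charge D = 0} {c : ℕ × ℕ} :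
    c ∈ ofMaya D hD ↔ IsCell D c.1 c.2 := by
  refine ⟨fun h => (mem_filter.1 h).2, fun h => mem_filter.2 ⟨?_, h⟩⟩
  rw [mem_product, mem_range, mem_range]
  exact lt_card_add_weight_of_isCell h

theorem ofMaya_maya (μ : YoungDiagram) (h : charge μ.maya = 0) : ofMaya μ.maya h = μ := by
  refine YoungDiagram.ext <| Finset.ext fun ⟨x, y⟩ => ?_
  rw [mem_cells, mem_cells, mem_ofMaya, IsCell]
  dsimp only
  rcases le_or_gt x y with hxy | hxy
  · obtain ⟨s, rfl⟩ := Nat.exists_eq_add_of_le hxy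
    rw [← lt_card_filter_maya_lt_iff μ s]
    push_cast
    simp only [add_sub_cancel_left]
    omega
  · obtain ⟨s, rfl⟩ := Nat.exists_eq_add_of_le hxy.le
    rw [← lt_card_filter_maya_le_iff μ s]
    push_cast
    rw [show (y : ℤ) - (y + s) = -s by ring]
    omega

theorem maya_ofMaya (D : Finset ℤ) (hD : charge D = 0) : (ofMaya D hD).maya = D := by
  refine eq_of_card_filter_lt_of_card_filter_le (fun s => ?_) (fun s => ?_)
  · refine eq_of_forall_lt_iff fun x => ?_
    rw [lt_card_filter_maya_lt_iff, mem_ofMaya, IsCell]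
    dsimp only
    push_cast
    simp only [add_sub_cancel_left]
    omega
  · refine eq_of_forall_lt_iff fun x => ?_
    rw [lt_card_filter_maya_le_iff, mem_ofMaya, IsCell]
    dsimp only
    push_cast
    rw [show (x : ℤ) - (x + s) = -s by ring]
    rcases s with _ | s
    · have := card_filter_pos_eq_of_charge_eq_zero hD
      simp only [Nat.cast_zero, neg_zero, add_zero] at this ⊢
      omega
    · omega

def equivMaya (n : ℕ) :
    {μ : YoungDiagram // #μ.cells = n} ≃ {D : Finset ℤ // charge D = 0 ∧ weight D = n} where
  toFun μ := ⟨μ.1.maya, charge_maya μ.1, by rw [weight_maya, μ.2]⟩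
  invFun D := ⟨ofMaya D.1 D.2.1, by rw [← weight_maya, maya_ofMaya, D.2.2]⟩
  left_inv μ := Subtype.ext <| ofMaya_maya μ.1 (charge_maya μ.1)
  right_inv D := Subtype.ext <| maya_ofMaya D.1 D.2.1

end YoungDiagram

namespace MayaDiagram

theorem count_zero (w : ℤ) : count 0 w = pz w := by
  rcases lt_or_ge w 0 with hw | hw
  · rw [pz, if_neg hw.not_ge]
    have : IsEmpty {D : Finset ℤ // charge D = 0 ∧ (weight D : ℤ) = w} := ⟨fun D => by omega⟩
    exact Nat.card_of_isEmpty
  · obtain ⟨n, rfl⟩ := Int.eq_ofNat_of_zero_le hw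
    rw [pz, if_pos hw, Int.toNat_natCast, ← Nat.card_eq_fintype_card,
      Nat.card_congr ((YoungDiagram.equivPartition n).trans (YoungDiagram.equivMaya n))]
    exact Nat.card_congr <| Equiv.subtypeEquivRight fun D => by rw [Nat.cast_inj]

theorem count_eq_pz (k w : ℤ) : count k w = pz (w - k * (k + 1) / 2) := by
  induction k using Int.induction_on generalizing w with
  | zero => simp [count_zero]
  | succ i ih =>
    rw [count_eq_count_sub_one, add_sub_cancel_right, ih,
      show (i + 1 : ℤ) * (i + 1 + 1) = i * (i + 1) + (i + 1) * 2 by ring,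
      Int.add_mul_ediv_right _ _ two_ne_zero]
    congr 1
    ring
  | pred i ih =>
    have h := count_eq_count_sub_one (-i) (w - i)
    rw [sub_neg_eq_add, sub_add_cancel, ih] at h
    rw [← h, show (-i : ℤ) * (-i + 1) = i * (i + 1) + -i * 2 by ring,
      Int.add_mul_ediv_right _ _ two_ne_zero,
      show (-i - 1 : ℤ) * (-i - 1 + 1) = i * (i + 1) by ring]
    congr 1
    ring

noncomputable def ofWeight (n : ℕ) : Finset (Finset ℤ) :=
  (Icc (-n : ℤ) n).powerset.filter (weight · = n)

theorem mem_ofWeight {n : ℕ} {D : Finset ℤ} : D ∈ ofWeight n ↔ weight D = n := by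
  refine ⟨fun h => (mem_filter.1 h).2, fun h => mem_filter.2 ⟨mem_powerset.2 fun d hd => ?_, h⟩⟩
  have := natAbs_le_weight hd
  rw [mem_Icc]
  omega

theorem count_eq_card (k : ℤ) (n : ℕ) : count k n = #{D ∈ ofWeight n | charge D = k} := by
  rw [count, ← Nat.card_eq_finsetCard]
  exact Nat.card_congr <| Equiv.subtypeEquivRight fun D => by simp [mem_ofWeight, and_comm]

theorem charge_mem_Icc {n : ℕ} {D : Finset ℤ} (hD : weight D = n) :
    -(n + 1 : ℤ) ≤ charge D ∧ charge D ≤ n := by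
  have hpos : {d ∈ D | 0 < d} ⊆ Icc 1 (n : ℤ) := fun d hd => by
    rw [mem_filter] at hd
    have := natAbs_le_weight hd.1
    rw [mem_Icc]
    omega
  have hneg : {d ∈ D | d ≤ 0} ⊆ Icc (-n : ℤ) 0 := fun d hd => by
    rw [mem_filter] at hd
    have := natAbs_le_weight hd.1
    rw [mem_Icc]
    omega
  have h1 := card_le_card hpos
  have h2 := card_le_card hneg
  rw [Int.card_Icc] at h1 h2
  rw [charge_eq_card_sub_card]
  omega

theorem card_ofWeight (n : ℕ) :
    #(ofWeight n) = ∑ j ∈ range (n + 1), 2 * pz (n - j * (j + 1) / 2) := by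
  -- the charges `k` and `-k-1` are collected in the fibre over `j = max k (-k-1)`
  have hmaps : Set.MapsTo (fun D => (max (charge D) (-charge D - 1)).toNat)
      (ofWeight n : Set (Finset ℤ)) (range (n + 1) : Set ℕ) := fun D hD => by
    have := charge_mem_Icc (mem_ofWeight.1 hD)
    rw [mem_coe, mem_range]
    dsimp only
    omega
  rw [card_eq_sum_card_fiberwise hmaps]
  refine sum_congr rfl fun j _ => ?_
  have hsplit : {D ∈ ofWeight n | (max (charge D) (-charge D - 1)).toNat = j} =
      {D ∈ ofWeight n | charge D = j} ∪ {D ∈ ofWeight n | charge D = -j - 1} := by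
    rw [← filter_or]
    exact filter_congr fun D _ => by omega
  rw [hsplit, card_union_of_disjoint (disjoint_filter.2 fun D _ h1 h2 => by omega),
    ← count_eq_card, ← count_eq_card, count_eq_pz, count_eq_pz,
    show (-j - 1 : ℤ) * (-j - 1 + 1) = j * (j + 1) by ring, two_mul]

theorem card_ofWeight_eq_two_mul (n : ℕ) : #(ofWeight n) = 2 * #{D ∈ ofWeight n | 0 ∉ D} := by
  rw [← card_filter_add_card_filter_not (fun D => 0 ∈ D), two_mul]
  congr 1
  refine card_nbij' toggleZero toggleZero ?_ ?_ (fun D _ => toggleZero_toggleZero D)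
    (fun D _ => toggleZero_toggleZero D)
  all_goals
    intro D hD
    simp only [coe_filter, Set.mem_ofPred_eq, mem_ofWeight, weight_toggleZero,
      zero_mem_toggleZero] at hD ⊢
    tauto

end MayaDiagram

def signedPart (p : ℕ × Fin 2) : ℤ := if p.2 = 0 then p.1 else -p.1

def coloredPart (d : ℤ) : ℕ × Fin 2 := (d.natAbs, if 0 < d then 0 else 1)

theorem coloredPart_signedPart {p : ℕ × Fin 2} (hp : 0 < p.1) : coloredPart (signedPart p) = p := by
  obtain ⟨x, c⟩ := p
  fin_cases c <;> simp [signedPart, coloredPart, hp]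

theorem signedPart_coloredPart {d : ℤ} (hd : d ≠ 0) : signedPart (coloredPart d) = d := by
  rcases lt_or_gt_of_ne hd with h | h
  · rw [signedPart, coloredPart, if_neg h.not_gt, if_neg Fin.zero_lt_one.ne',
      Int.ofNat_natAbs_of_nonpos h.le, neg_neg]
  · rw [signedPart, coloredPart, if_pos h, if_pos rfl, Int.natAbs_of_nonneg h.le]

theorem natAbs_signedPart (p : ℕ × Fin 2) : (signedPart p).natAbs = p.1 := by
  unfold signedPart
  split_ifs <;> simp

theorem D2_eq_card (n : ℕ) : D2 n = #{D ∈ MayaDiagram.ofWeight n | 0 ∉ D} := by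
  have hcol {s : Finset (ℕ × Fin 2)} (hs : ∀ p ∈ s, 0 < p.1) :
      (s.image signedPart).image coloredPart = s := by
    rw [image_image, image_congr (f := coloredPart ∘ signedPart) (g := id)
      fun p hp => coloredPart_signedPart (hs p hp), image_id]
  have hsig {D : Finset ℤ} (hD : 0 ∉ D) : (D.image coloredPart).image signedPart = D := by
    rw [image_image, image_congr (f := signedPart ∘ coloredPart) (g := id)
      fun d hd => signedPart_coloredPart (ne_of_mem_of_not_mem hd hD), image_id]
  rw [D2, ← Set.ncard_coe_finset]
  refine Set.ncard_congr (fun s _ => s.image signedPart) (fun s hs => ?_)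
    (fun s t hs ht h => by rw [← hcol hs.1, h, hcol ht.1]) (fun D hD => ?_)
  · rw [mem_coe, mem_filter, MayaDiagram.mem_ofWeight, MayaDiagram.weight,
      sum_image fun p hp q hq h => by
        rw [← coloredPart_signedPart (hs.1 p hp), h, coloredPart_signedPart (hs.1 q hq)]]
    refine ⟨by simpa only [natAbs_signedPart] using hs.2, fun h0 => ?_⟩
    obtain ⟨p, hp, hp0⟩ := mem_image.1 h0
    have := natAbs_signedPart p
    rw [hp0] at this
    exact (hs.1 p hp).ne' this.symm
  · rw [mem_coe, mem_filter, MayaDiagram.mem_ofWeight] at hD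
    refine ⟨D.image coloredPart, ⟨fun p hp => ?_, ?_⟩, hsig hD.2⟩
    · obtain ⟨d, hd, rfl⟩ := mem_image.1 hp
      exact Int.natAbs_pos.2 (ne_of_mem_of_not_mem hd hD.2)
    · rw [sum_image fun d hd e he h => by
        rw [← signedPart_coloredPart (ne_of_mem_of_not_mem hd hD.2), h,
          signedPart_coloredPart (ne_of_mem_of_not_mem he hD.2)]]
      exact hD.1

def Nat.Partition.equivContaining {n : ℕ} {S : Multiset ℕ} (hS : ∀ i ∈ S, 0 < i) (hSn : S.sum ≤ n) :
    {π : Nat.Partition n // S ≤ π.parts} ≃ Nat.Partition (n - S.sum) where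
  toFun π := ⟨π.1.parts - S, fun hi => π.1.parts_pos (Multiset.mem_of_le tsub_le_self hi), by
    have := congrArg Multiset.sum (tsub_add_cancel_of_le π.2)
    rw [Multiset.sum_add, π.1.parts_sum] at this
    omega⟩
  invFun μ := ⟨⟨μ.parts + S, fun hi => (Multiset.mem_add.1 hi).elim μ.parts_pos (hS _), by
    rw [Multiset.sum_add, μ.parts_sum]
    omega⟩, le_add_self⟩
  left_inv π := Subtype.ext <| Nat.Partition.ext <| tsub_add_cancel_of_le π.2
  right_inv μ := Nat.Partition.ext <| add_tsub_cancel_right _ _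

theorem Nat.Partition.card_filter_le_parts {n : ℕ} {S : Multiset ℕ} (hS : ∀ i ∈ S, 0 < i) :
    #{π : Nat.Partition n | S ≤ π.parts} = pz (n - S.sum) := by
  by_cases hSn : S.sum ≤ n
  · rw [pz, if_pos (by omega), show ((n : ℤ) - S.sum).toNat = n - S.sum by omega,
      ← Fintype.card_congr (equivContaining hS hSn), Fintype.card_subtype]
  · rw [pz, if_neg (by omega), Finset.card_eq_zero, filter_eq_empty_iff]
    intro π _ hle
    have := congrArg Multiset.sum (tsub_add_cancel_of_le hle)
    rw [Multiset.sum_add, π.parts_sum] at this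
    omega

theorem sum_Icc_id_mul_two (j : ℕ) : (∑ i ∈ Icc 1 j, i) * 2 = j * (j + 1) := by
  induction j with
  | zero => rfl
  | succ j ih =>
    rw [sum_Icc_succ_top (by omega), add_mul, ih]
    ring

theorem lt_mex_iff {n : ℕ} (π : Nat.Partition n) (j : ℕ) : j < mex π ↔ (Icc 1 j).val ≤ π.parts := by
  have hne : {m : ℕ | 0 < m ∧ m ∉ π.parts}.Nonempty := ⟨n + 1, n.succ_pos, fun h => by
    have := Multiset.le_sum_of_mem h
    rw [π.parts_sum] at this
    omega⟩
  rw [mex, Nat.lt_iff_add_one_le, le_csInf_iff'' hne, Multiset.le_iff_subset (nodup _)]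
  constructor
  · intro h i hi
    rw [mem_val, mem_Icc] at hi
    by_contra hni
    have := h i ⟨hi.1, hni⟩
    omega
  · rintro h m ⟨hm, hmp⟩
    by_contra hlt
    exact hmp (h (mem_Icc.2 ⟨hm, by omega⟩ : m ∈ Icc 1 j))

theorem mex_le {n : ℕ} (π : Nat.Partition n) : mex π ≤ n + 1 := by
  refine Nat.sInf_le ⟨n.succ_pos, fun h => ?_⟩
  have := Multiset.le_sum_of_mem h
  rw [π.parts_sum] at this
  omega

theorem sum_mex (n : ℕ) :
    ∑ π : Nat.Partition n, mex π = ∑ j ∈ range (n + 1), pz (n - j * (j + 1) / 2) := by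
  have hmex (π : Nat.Partition n) : mex π = #{j ∈ range (n + 1) | (Icc 1 j).val ≤ π.parts} := by
    have hle := mex_le π
    rw [← card_range (mex π)]
    exact congrArg card <| Finset.ext fun j => by
      rw [mem_range, mem_filter, mem_range, ← lt_mex_iff]
      omega
  have hstair (j : ℕ) : (((Icc 1 j).val.sum : ℕ) : ℤ) = j * (j + 1) / 2 := by
    refine Int.eq_ediv_of_mul_eq_right two_ne_zero ?_
    rw [sum_val, mul_comm]
    exact_mod_cast sum_Icc_id_mul_two j
  simp_rw [hmex, card_filter]
  rw [sum_comm]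
  refine sum_congr rfl fun j _ => ?_
  rw [← card_filter, Nat.Partition.card_filter_le_parts fun i hi => (mem_Icc.1 hi).1,
    hstair]

theorem sigma_mex_eq_D2_general (n : ℕ) :
    ∑ π : Nat.Partition n, mex π = D2 n := by
  have h : 2 * D2 n = 2 * ∑ j ∈ range (n + 1), pz (n - j * (j + 1) / 2) := by
    rw [D2_eq_card, ← MayaDiagram.card_ofWeight_eq_two_mul, MayaDiagram.card_ofWeight, mul_sum]
  rw [sum_mex]
  omega

theorem sigma_mex_eq_D2 (n : ℕ) (hn : 0 < n) :
    ∑ π : Nat.Partition n, mex π = D2 n :=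
  sigma_mex_eq_D2_general n
end

section
/- For positive integers k and n, Σ_{π ⊢ n} (mex(π))^k = Σ_{m≥0} ((m+1)^k − m^k) · p(n − m(m+1)/2), with p(j)=0 for j<0. -/
/-!
Telescoping, `mex π ^ k = ∑_{m < mex π} ((m + 1) ^ k - m ^ k)`, so after exchanging the sums the
moment is `∑_m ((m + 1) ^ k - m ^ k) · #{π | m < mex π}`. A partition has mex exceeding `m`
exactly when it contains the parts `1, …, m`, and deleting these parts is a bijection onto the
partitions of `n - m (m + 1) / 2`.
-/

open Finset

def staircase (m : ℕ) : Multiset ℕ := (Icc 1 m).val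

@[simp]
lemma mem_staircase {m i : ℕ} : i ∈ staircase m ↔ 1 ≤ i ∧ i ≤ m := by
  simp [staircase]

lemma staircase_sum (m : ℕ) : (staircase m).sum = m * (m + 1) / 2 := by
  have gauss := sum_range_id (m + 1)
  rw [range_eq_Ico, sum_eq_sum_Ico_succ_bot (by omega), Ico_add_one_right_eq_Icc] at gauss
  simpa [staircase, Finset.sum_val, mul_comm] using gauss

section Mex

variable {n : ℕ} (π : Nat.Partition n)

lemma exists_pos_not_mem_parts : ∃ m, 0 < m ∧ m ∉ π.parts :=
  ⟨n + 1, n.succ_pos, fun h => by have := Nat.Partition.le_of_mem_parts h; omega⟩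

lemma mex_pos_and_not_mem_parts : 0 < mex π ∧ mex π ∉ π.parts :=
  Nat.sInf_mem (exists_pos_not_mem_parts π)

lemma lt_mex_iff_s5 {m : ℕ} : m < mex π ↔ staircase m ≤ π.parts := by
  rw [Multiset.le_iff_subset (s := staircase m) (Icc 1 m).nodup]
  constructor
  · intro h i hi
    rw [mem_staircase] at hi
    by_contra hni
    have := Nat.sInf_le (s := {m : ℕ | 0 < m ∧ m ∉ π.parts}) ⟨hi.1, hni⟩
    rw [← mex] at this
    omega
  · intro h
    by_contra! hle
    obtain ⟨hpos, hnot⟩ := mex_pos_and_not_mem_parts π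
    exact hnot (h (mem_staircase.2 ⟨hpos, hle⟩))

lemma mex_le_succ : mex π ≤ n + 1 := by
  by_contra! hlt
  have hmem : n + 1 ∈ π.parts :=
    Multiset.mem_of_le ((lt_mex_iff_s5 π).1 hlt) (mem_staircase.2 ⟨by omega, le_rfl⟩)
  have := Nat.Partition.le_of_mem_parts hmem
  omega

lemma sum_parts_sub_staircase {m : ℕ} (h : m < mex π) :
    (π.parts - staircase m).sum + m * (m + 1) / 2 = n := by
  rw [← staircase_sum, ← Multiset.sum_add, tsub_add_cancel_of_le ((lt_mex_iff_s5 π).1 h),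
    π.parts_sum]

end Mex

def staircaseEquiv (m n : ℕ) (hm : m * (m + 1) / 2 ≤ n) :
    {π : Nat.Partition n // m < mex π} ≃ Nat.Partition (n - m * (m + 1) / 2) where
  toFun π :=
    ⟨π.1.parts - staircase m,
      fun hi => π.1.parts_pos (Multiset.mem_of_le (Multiset.sub_le_self _ _) hi),
      by have := sum_parts_sub_staircase π.1 π.2; omega⟩
  invFun π :=
    ⟨⟨π.parts + staircase m,
      fun hi => (Multiset.mem_add.1 hi).elim π.parts_pos fun hs => (mem_staircase.1 hs).1,
      by rw [Multiset.sum_add, π.parts_sum, staircase_sum]; omega⟩,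
    (lt_mex_iff_s5 _).2 (Multiset.le_add_left _ _)⟩
  left_inv π := Subtype.ext <| Nat.Partition.ext <| tsub_add_cancel_of_le ((lt_mex_iff_s5 _).1 π.2)
  right_inv π := Nat.Partition.ext <| add_tsub_cancel_right _ _

lemma card_lt_mex_eq_pz (m n : ℕ) :
    #{π : Nat.Partition n | m < mex π} = pz ((n : ℤ) - (m * (m + 1) / 2 : ℕ)) := by
  by_cases hm : m * (m + 1) / 2 ≤ n
  · rw [pz, if_pos (by omega), show ((n : ℤ) - (m * (m + 1) / 2 : ℕ)).toNat = n - m * (m + 1) / 2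
      by omega, ← Fintype.card_subtype, Fintype.card_congr (staircaseEquiv m n hm)]
  · rw [pz, if_neg (by omega), card_eq_zero, filter_eq_empty_iff]
    intro π _ h
    have := sum_parts_sub_staircase π h
    omega

lemma sum_range_sub_mul_ite_lt {f : ℕ → ℕ} (hf : Monotone f) {a N : ℕ} (ha : a ≤ N) :
    ∑ m ∈ range N, (f (m + 1) - f m) * (if m < a then 1 else 0) = f a - f 0 := by
  have hrange : {m ∈ range N | m < a} = range a := by
    ext m
    simp only [mem_filter, mem_range]
    omega
  rw [← sum_range_tsub hf, ← hrange, sum_filter]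
  simp_rw [mul_ite, mul_one, mul_zero]

theorem kth_moment_mex_general (k n : ℕ) (hk : 0 < k) :
    ∑ π : Nat.Partition n, (mex π) ^ k =
      ∑ m ∈ Finset.range (n + 1),
        ((m + 1) ^ k - m ^ k) * pz ((n : ℤ) - (m * (m + 1) / 2 : ℕ)) := by
  calc ∑ π : Nat.Partition n, (mex π) ^ k
      = ∑ π : Nat.Partition n, ∑ m ∈ range (n + 1),
          ((m + 1) ^ k - m ^ k) * (if m < mex π then 1 else 0) := by
        refine sum_congr rfl fun π _ => ?_
        rw [sum_range_sub_mul_ite_lt (pow_left_mono k) (mex_le_succ π), zero_pow hk.ne',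
          Nat.sub_zero]
    _ = ∑ m ∈ range (n + 1), ((m + 1) ^ k - m ^ k) * #{π : Nat.Partition n | m < mex π} := by
        rw [sum_comm]
        simp_rw [← mul_sum, card_filter]
    _ = _ := by simp_rw [card_lt_mex_eq_pz]

theorem kth_moment_mex (k n : ℕ) (hk : 0 < k) (hn : 0 < n) :
    ∑ π : Nat.Partition n, (mex π) ^ k =
      ∑ m ∈ Finset.range (n + 1),
        ((m + 1) ^ k - m ^ k) * pz ((n : ℤ) - (m * (m + 1) / 2 : ℕ)) :=
  kth_moment_mex_general k n hk
end

section
/- For positive integers k and n, Σ_{π ⊢ n} (−1)^{mex(π)−1} (mex(π))^k = Σ_{m≥0} (−1)^m ((m+1)^k + m^k) · p(n − m(m+1)/2), with p(j)=0 for j<0. -/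
open Finset

/-!
A partition `π` has `m < mex π` exactly when `1, …, m` are all parts of `π`, so removing these
parts shows that `#{π ⊢ n | m < mex π} = p(n - m(m+1)/2)`. With `f j = (-1)^(j-1) j^k`, which
vanishes at `0` because `k > 0`, telescoping gives `f (mex π) = ∑_{m < mex π} (f (m+1) - f m)`,
and `f (m+1) - f m = (-1)^m ((m+1)^k + m^k)`; exchanging the two summations proves the identity.
-/

theorem Finset.sum_comp_eq_sum_card_lt_smul_sub {ι M : Type*} [AddCommGroup M]
    (s : Finset ι) (h : ι → ℕ) {N : ℕ} (hN : ∀ i ∈ s, h i ≤ N) (g : ℕ → M) (hg : g 0 = 0) :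
    ∑ i ∈ s, g (h i) = ∑ m ∈ range N, #{i ∈ s | m < h i} • (g (m + 1) - g m) := by
  have telescope : ∀ i ∈ s,
      g (h i) = ∑ m ∈ range N, if m < h i then g (m + 1) - g m else 0 := by
    intro i hi
    have hrange : {m ∈ range N | m < h i} = range (h i) := by
      ext m
      simp only [mem_filter, mem_range]
      have := hN i hi
      omega
    rw [← sum_filter, hrange, sum_range_sub, hg, sub_zero]
  rw [sum_congr rfl telescope, sum_comm]
  simp only [← sum_filter, sum_const]

namespace Nat.Partition

def subtypeLePartsEquiv {n : ℕ} (s : Multiset ℕ) (hs : ∀ i ∈ s, 0 < i) (h : s.sum ≤ n) :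
    {π : n.Partition // s ≤ π.parts} ≃ (n - s.sum).Partition where
  toFun π := ⟨π.1.parts - s, fun hi => π.1.parts_pos (Multiset.mem_of_le tsub_le_self hi), by
    have := congrArg Multiset.sum (tsub_add_cancel_of_le π.2)
    rw [Multiset.sum_add, π.1.parts_sum] at this
    omega⟩
  invFun μ := ⟨⟨μ.parts + s, by grind, by simp [μ.parts_sum, h]⟩, Multiset.le_add_left _ _⟩
  left_inv π := Subtype.ext <| Partition.ext <| tsub_add_cancel_of_le π.2
  right_inv μ := Partition.ext <| add_tsub_cancel_right _ _

theorem card_filter_le_parts_s6 (n : ℕ) (s : Multiset ℕ) (hs : ∀ i ∈ s, 0 < i) :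
    #{π : n.Partition | s ≤ π.parts} = pz ((n : ℤ) - s.sum) := by
  by_cases h : s.sum ≤ n
  · rw [pz, if_pos (by omega), show ((n : ℤ) - s.sum).toNat = n - s.sum by omega,
      ← Fintype.card_subtype, Fintype.card_congr (subtypeLePartsEquiv s hs h)]
  · rw [pz, if_neg (by omega), Finset.card_eq_zero, filter_eq_empty_iff]
    intro π _ hle
    obtain ⟨u, hu⟩ := Multiset.le_iff_exists_add.1 hle
    have := congrArg Multiset.sum hu
    rw [Multiset.sum_add, π.parts_sum] at this
    omega

theorem mex_pos_and_notMem_parts {n : ℕ} (π : n.Partition) : 0 < mex π ∧ mex π ∉ π.parts :=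
  Nat.sInf_mem (s := {m | 0 < m ∧ m ∉ π.parts})
    ⟨n + 1, n.succ_pos, fun h => by have := le_of_mem_parts h; omega⟩

theorem mex_le {n : ℕ} (π : n.Partition) : mex π ≤ n + 1 :=
  Nat.sInf_le (s := {m | 0 < m ∧ m ∉ π.parts})
    ⟨n.succ_pos, fun h => by have := le_of_mem_parts h; omega⟩

theorem lt_mex_iff {n : ℕ} (π : n.Partition) (m : ℕ) :
    m < mex π ↔ (Icc 1 m).val ≤ π.parts := by
  rw [Multiset.le_iff_subset (Icc 1 m).nodup]
  constructor
  · intro h j hj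
    rw [mem_val, mem_Icc] at hj
    by_contra hj'
    exact Nat.notMem_of_lt_sInf (s := {m | 0 < m ∧ m ∉ π.parts}) (show j < mex π by omega)
      ⟨by omega, hj'⟩
  · intro h
    by_contra! hle
    obtain ⟨hpos, hnot⟩ := mex_pos_and_notMem_parts π
    exact hnot (h (by rw [mem_val, mem_Icc]; omega))

theorem card_filter_lt_mex (n m : ℕ) :
    #{π : n.Partition | m < mex π} = pz ((n : ℤ) - (m * (m + 1) / 2 : ℕ)) := by
  have sum_Icc : (Icc 1 m).val.sum = m * (m + 1) / 2 := by
    have h := sum_range_id (m + 1)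
    rw [range_eq_Ico, sum_eq_sum_Ico_succ_bot m.succ_pos] at h
    simpa [sum_val, mul_comm, ← Ico_add_one_right_eq_Icc] using h
  simp_rw [lt_mex_iff]
  rw [card_filter_le_parts_s6 n _ (fun i hi => by rw [mem_val, mem_Icc] at hi; omega), sum_Icc]

end Nat.Partition

theorem alternating_pow_succ_sub {k : ℕ} (hk : 0 < k) (m : ℕ) :
    (-1 : ℤ) ^ (m + 1 - 1) * ((m + 1 : ℕ) : ℤ) ^ k - (-1) ^ (m - 1) * (m : ℤ) ^ k
      = (-1) ^ m * ((m + 1) ^ k + m ^ k) := by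
  rcases m with _ | m
  · simp [hk.ne']
  · simp only [Nat.add_sub_cancel, pow_succ]
    push_cast
    ring

theorem kth_alternating_moment_mex_general (k n : ℕ) (hk : 0 < k) :
    ∑ π : Nat.Partition n, (-1 : ℤ) ^ (mex π - 1) * (mex π : ℤ) ^ k =
      ∑ m ∈ Finset.range (n + 1),
        (-1 : ℤ) ^ m * ((m + 1) ^ k + m ^ k) * pz ((n : ℤ) - (m * (m + 1) / 2 : ℕ)) := by
  rw [sum_comp_eq_sum_card_lt_smul_sub univ mex (fun π _ => Nat.Partition.mex_le π)
    (fun j => (-1 : ℤ) ^ (j - 1) * (j : ℤ) ^ k) (by simp [hk.ne'])]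
  refine sum_congr rfl fun m _ => ?_
  rw [Nat.Partition.card_filter_lt_mex, alternating_pow_succ_sub hk, nsmul_eq_mul]
  ring

theorem kth_alternating_moment_mex (k n : ℕ) (hk : 0 < k) (hn : 0 < n) :
    ∑ π : Nat.Partition n, (-1 : ℤ) ^ (mex π - 1) * (mex π : ℤ) ^ k =
      ∑ m ∈ Finset.range (n + 1),
        (-1 : ℤ) ^ m * ((m + 1) ^ k + m ^ k) * pz ((n : ℤ) - (m * (m + 1) / 2 : ℕ)) :=
  kth_alternating_moment_mex_general k n hk
end

section
/- For every positive integer m and nonnegative integer n, the number of partitions of n with minimal excludant equal to m equals p(n − m(m−1)/2) − p(n − m(m+1)/2), where p(j)=0 for j<0. -/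
open Finset

/-! A partition has mex `m` exactly when it contains `1, …, m - 1` but not `m`, so `pmex m n`
counts the partitions of `n` containing `1, …, m - 1` minus those containing `1, …, m`.
Deleting a fixed multiset `s` of positive parts is a bijection from the partitions of `n`
containing `s` onto the partitions of `n - Σ s`, and `1 + ⋯ + (m - 1) = m (m - 1) / 2`. -/

namespace Nat.Partition

variable {n : ℕ}

lemma sum_le_of_le_parts {s : Multiset ℕ} {π : Partition n} (h : s ≤ π.parts) : s.sum ≤ n := by
  obtain ⟨u, hu⟩ := Multiset.le_iff_exists_add.mp h
  have := congrArg Multiset.sum hu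
  rw [Multiset.sum_add, π.parts_sum] at this
  omega

def equivSubtypeLeParts (s : Multiset ℕ) (hs : ∀ i ∈ s, 0 < i) (h : s.sum ≤ n) :
    {π : Partition n // s ≤ π.parts} ≃ Partition (n - s.sum) where
  toFun π := ⟨π.1.parts - s, fun hi => π.1.parts_pos (Multiset.mem_of_le tsub_le_self hi), by
    have := congrArg Multiset.sum (tsub_add_cancel_of_le π.2)
    rw [Multiset.sum_add, π.1.parts_sum] at this
    omega⟩
  invFun σ := ⟨⟨σ.parts + s, fun hi => (Multiset.mem_add.mp hi).elim σ.parts_pos (hs _), by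
    rw [Multiset.sum_add, σ.parts_sum]
    omega⟩, Multiset.le_add_left _ _⟩
  left_inv π := Subtype.ext (Partition.ext (tsub_add_cancel_of_le π.2))
  right_inv σ := Partition.ext (add_tsub_cancel_right _ _)

theorem card_filter_le_parts_eq_pz (s : Multiset ℕ) (hs : ∀ i ∈ s, 0 < i) :
    #{π : Partition n | s ≤ π.parts} = pz (n - s.sum) := by
  by_cases h : s.sum ≤ n
  · rw [pz, if_pos (by omega), show ((n : ℤ) - s.sum).toNat = n - s.sum by omega,
      ← Fintype.card_subtype, Fintype.card_congr (equivSubtypeLeParts s hs h)]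
  · rw [pz, if_neg (by omega), Finset.card_eq_zero, filter_eq_empty_iff]
    exact fun π _ hle => h (sum_le_of_le_parts hle)

lemma Ico_one_le_parts_iff {π : Partition n} {m : ℕ} :
    (Ico 1 m).val ≤ π.parts ↔ ∀ i ∈ Ico 1 m, i ∈ π.parts :=
  Multiset.le_iff_subset (Ico 1 m).nodup

lemma mex_eq_iff {π : Partition n} {m : ℕ} (hm : 0 < m) :
    mex π = m ↔ (Ico 1 m).val ≤ π.parts ∧ m ∉ π.parts := by
  have hne : {i | 0 < i ∧ i ∉ π.parts}.Nonempty :=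
    ⟨n + 1, n.succ_pos, fun h => absurd (le_of_mem_parts h) (by omega)⟩
  rw [Ico_one_le_parts_iff]
  constructor
  · rintro rfl
    refine ⟨fun i hi => ?_, (Nat.sInf_mem hne).2⟩
    obtain ⟨hi1, him⟩ := mem_Ico.mp hi
    by_contra hi
    exact him.not_ge (Nat.sInf_le ⟨hi1, hi⟩)
  · rintro ⟨hbelow, hmex⟩
    obtain ⟨hpos, hnot⟩ := Nat.sInf_mem hne
    refine le_antisymm (Nat.sInf_le ⟨hm, hmex⟩) (not_lt.mp fun hlt => hnot ?_)
    exact hbelow _ (mem_Ico.mpr ⟨hpos, hlt⟩)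

lemma Ico_one_succ_le_parts_iff {π : Partition n} {m : ℕ} (hm : 0 < m) :
    (Ico 1 (m + 1)).val ≤ π.parts ↔ (Ico 1 m).val ≤ π.parts ∧ m ∈ π.parts := by
  simp only [Ico_one_le_parts_iff, mem_Ico]
  grind

end Nat.Partition

lemma pmex_add_card_filter_le_parts {m : ℕ} (n : ℕ) (hm : 0 < m) :
    pmex m n + #{π : Nat.Partition n | (Ico 1 (m + 1)).val ≤ π.parts} =
      #{π : Nat.Partition n | (Ico 1 m).val ≤ π.parts} := by
  conv_rhs => rw [← card_filter_add_card_filter_not (fun π => m ∉ π.parts)]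
  simp only [pmex, filter_filter, Nat.Partition.mex_eq_iff hm,
    Nat.Partition.Ico_one_succ_le_parts_iff hm, not_not]

lemma Finset.sum_val_Ico_one (m : ℕ) : (Ico 1 m).val.sum = m * (m - 1) / 2 := by
  rcases m.eq_zero_or_pos with rfl | hm
  · rfl
  · rw [← sum_range_id, sum_range_eq_add_Ico _ hm, zero_add, sum_eq_multiset_sum, Multiset.map_id']

theorem pmex_formula (m n : ℕ) (hm : 0 < m) :
    (pmex m n : ℤ) =
      (pz ((n : ℤ) - (m * (m - 1) / 2 : ℕ)) : ℤ) -
        pz ((n : ℤ) - (m * (m + 1) / 2 : ℕ)) := by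
  have hpos : ∀ k, ∀ i ∈ (Ico 1 k).val, 0 < i := fun k i hi => (mem_Ico.mp (mem_val.mp hi)).1
  have h := pmex_add_card_filter_le_parts n hm
  rw [Nat.Partition.card_filter_le_parts_eq_pz _ (hpos _),
    Nat.Partition.card_filter_le_parts_eq_pz _ (hpos _), Finset.sum_val_Ico_one,
    Finset.sum_val_Ico_one, add_tsub_cancel_right, mul_comm (m + 1)] at h
  omega
end
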